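/- For all natural numbers m > n ≥ 1, B_{m-n} < B_m / B_n (equivalently, B_{m-n} * B_n < B_m), where B is the balancing sequence. -/

import Mathlib

def B : ℕ → ℕ
  | 0 => 0
  | 1 => 1
  | (n + 2) => 6 * B (n + 1) - B n

/-! The addition formula `B (m + n + 1) = B (m + 1) * B (n + 1) - B m * B n` writes `B m` for
`m = d + n` as `B d * B (n + 1) - B (d - 1) * B n`. Since `B (d - 1) < B d` and `B (n + 1) ≥ 5 * B n`,
this exceeds `B d * B n`. -/

lemma B_succ_succ (n : ℕ) : B (n + 2) = 6 * B (n + 1) - B n := rfl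

lemma B_lt_B_succ (n : ℕ) : B n < B (n + 1) := by
  induction n with
  | zero => decide
  | succ n ih => rw [B_succ_succ]; omega

lemma strictMono_B : StrictMono B := strictMono_nat_of_lt_succ B_lt_B_succ

lemma B_pos {n : ℕ} (hn : 0 < n) : 0 < B n := strictMono_B hn

lemma B_add_two_add_B (n : ℕ) : B (n + 2) + B n = 6 * B (n + 1) := by
  have := B_lt_B_succ n
  rw [B_succ_succ]
  omega

lemma five_mul_B_le_B_succ (n : ℕ) : 5 * B n ≤ B (n + 1) := by
  cases n with
  | zero => decide
  | succ n =>
    have := B_lt_B_succ n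
    rw [B_succ_succ]
    omega

lemma B_add_add_one_add_mul (m n : ℕ) :
    B (m + n + 1) + B m * B n = B (m + 1) * B (n + 1) := by
  induction n using Nat.twoStepInduction with
  | zero => simp [B]
  | one => simpa [B, mul_comm] using B_add_two_add_B m
  | more n ih₁ ih₂ =>
    have h₁ := B_add_two_add_B (m + n + 1)
    have h₂ := B_add_two_add_B n
    have h₃ := B_add_two_add_B (n + 1)
    zify at *
    linear_combination h₁ - ih₁ + 6 * ih₂ + (B m : ℤ) * h₂ - (B (m + 1) : ℤ) * h₃

theorem stmt10 : ∀ m n : ℕ, 1 ≤ n → n < m → B (m - n) * B n < B m := by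
  intro m n hn hnm
  obtain ⟨d, rfl⟩ : ∃ d, m = d + n + 1 := ⟨m - n - 1, by omega⟩
  rw [show d + n + 1 - n = d + 1 by omega]
  have hBd := B_lt_B_succ d
  have hBn := B_pos hn
  have hBn' := five_mul_B_le_B_succ n
  have hadd := B_add_add_one_add_mul d n
  suffices B (d + 1) * B n + B d * B n < B (d + 1) * B (n + 1) by omega
  calc B (d + 1) * B n + B d * B n < B (d + 1) * B n + B (d + 1) * B n := by gcongr
    _ ≤ B (d + 1) * B (n + 1) := by rw [← mul_add]; gcongr; omega
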